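/- For every i = 1,…,m, every z ∈ ℝ^{d̄} and every coordinate j ∈ {1,…,d̄}, the partial derivative satisfies |∂h_i(z)/∂z_j| < 25π; consequently ‖∇h_i(z)‖ ≤ 25π·√d̄ for all z, and each h_i is 25π·√d̄-Lipschitz continuous, i.e., |h_i(z) − h_i(z′)| ≤ 25π·√d̄·‖z − z′‖ for all z, z′ ∈ ℝ^{d̄}. -/

import Mathlib

open Real Matrix Finset
open scoped Kronecker

noncomputable section

def Psi (u : ℝ) : ℝ := if u ≤ 0 then 0 else 1 - Real.exp (-u ^ 2)
def Phi (v : ℝ) : ℝ := 4 * Real.arctan v + 2 * π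
def zc {d : ℕ} (z : EuclideanSpace ℝ (Fin d)) (j : ℕ) : ℝ :=
  if h : 1 ≤ j ∧ j - 1 < d then z ⟨j - 1, h.2⟩ else 0
def phi {d : ℕ} (z : EuclideanSpace ℝ (Fin d)) (j : ℕ) : ℝ :=
  if j = 1 then -(Psi 1 * Phi (zc z 1))
  else Psi (-zc z (j - 1)) * Phi (-zc z j) - Psi (zc z (j - 1)) * Phi (zc z j)
def hfun (m i : ℕ) {d : ℕ} (z : EuclideanSpace ℝ (Fin d)) : ℝ :=
  if i ≤ m / 3 then phi z 1 + 3 * ∑ j ∈ Finset.Icc 1 (d / 2), phi z (2 * j)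
  else if i ≤ 2 * m / 3 then phi z 1
  else phi z 1 + 3 * ∑ j ∈ Finset.Icc 1 (d / 2), phi z (2 * j + 1)
def ff (m : ℕ) (Lf ε : ℝ) (i : ℕ) {d : ℕ} (z : EuclideanSpace ℝ (Fin d)) : ℝ :=
  300 * π * ε ^ 2 / (m * Lf) * hfun m i ((Real.sqrt m * Lf / (150 * π * ε)) • z)
def blkN {m d : ℕ} (x : EuclideanSpace ℝ (Fin m × Fin d)) (i : ℕ) :
    EuclideanSpace ℝ (Fin d) :=
  WithLp.toLp 2 (fun j => if h : 1 ≤ i ∧ i - 1 < m then x (⟨i - 1, h.2⟩, j) else 0)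
def f0 (m : ℕ) (Lf ε : ℝ) {d : ℕ} (x : EuclideanSpace ℝ (Fin m × Fin d)) : ℝ :=
  ∑ i ∈ Finset.Icc 1 m, ff m Lf ε i (blkN x i)
def l1norm {ι : Type*} [Fintype ι] (x : ι → ℝ) : ℝ := ∑ i, |x i|
def Jmat (p : ℕ) : Matrix (Fin (p - 1)) (Fin p) ℝ :=
  Matrix.of fun i j => if j.val = i.val then -1 else if j.val = i.val + 1 then 1 else 0
def Hmat (m d : ℕ) (Lf : ℝ) : Matrix (Fin (m - 1) × Fin d) (Fin m × Fin d) ℝ :=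
  ((m : ℝ) * Lf) • (Jmat m ⊗ₖ (1 : Matrix (Fin d) (Fin d) ℝ))
def Mset (m₁ m₂ : ℕ) : Finset ℕ := (Finset.Icc 1 (3 * m₂ - 1)).image (· * m₁)
def JM (m₁ m₂ : ℕ) : Matrix (Fin (3 * m₂ - 1)) (Fin (3 * m₁ * m₂)) ℝ :=
  Matrix.of fun i j =>
    if j.val + 1 = (i.val + 1) * m₁ then -1
    else if j.val = (i.val + 1) * m₁ then 1 else 0
def Abar (m₁ m₂ d : ℕ) (Lf : ℝ) :
    Matrix (Fin (3 * m₂ - 1) × Fin d) (Fin (3 * m₁ * m₂) × Fin d) ℝ :=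
  ((3 * m₁ * m₂ : ℕ) * Lf) • (JM m₁ m₂ ⊗ₖ (1 : Matrix (Fin d) (Fin d) ℝ))
abbrev MCidx (m₁ m₂ : ℕ) := {k : Fin (3 * m₁ * m₂ - 1) // k.val + 1 ∉ Mset m₁ m₂}
def JMC (m₁ m₂ : ℕ) : Matrix (MCidx m₁ m₂) (Fin (3 * m₁ * m₂)) ℝ :=
  Matrix.of fun k j => Jmat (3 * m₁ * m₂) k.val j
def Amat (m₁ m₂ d : ℕ) (Lf : ℝ) :
    Matrix (MCidx m₁ m₂ × Fin d) (Fin (3 * m₁ * m₂) × Fin d) ℝ :=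
  ((3 * m₁ * m₂ : ℕ) * Lf) • (JMC m₁ m₂ ⊗ₖ (1 : Matrix (Fin d) (Fin d) ℝ))
def mvec {ι κ : Type*} [Fintype κ] (M : Matrix ι κ ℝ) (x : EuclideanSpace ℝ κ) :
    EuclideanSpace ℝ ι :=
  WithLp.toLp 2 (fun i => ∑ j, M i j * x j)
def sNorm {ι κ : Type*} [Fintype ι] [Fintype κ] [DecidableEq κ] (M : Matrix ι κ ℝ) : ℝ :=
  ‖LinearMap.toContinuousLinearMap (Matrix.toEuclideanLin M)‖
def lamMax {ι : Type*} [Fintype ι] [DecidableEq ι] (M : Matrix ι ι ℝ) : ℝ :=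
  sSup (spectrum ℝ M)
def lamMinPos {ι : Type*} [Fintype ι] [DecidableEq ι] (M : Matrix ι ι ℝ) : ℝ :=
  sInf (spectrum ℝ M ∩ Set.Ioi 0)
def condNum {ι κ : Type*} [Fintype ι] [DecidableEq ι] [Fintype κ] (M : Matrix ι κ ℝ) : ℝ :=
  Real.sqrt (lamMax (M * Mᵀ) / lamMinPos (M * Mᵀ))
def gfun (m₁ m₂ d : ℕ) (β : ℝ) (x : EuclideanSpace ℝ (Fin (3 * m₁ * m₂) × Fin d)) : ℝ :=
  β * ∑ i ∈ Mset m₁ m₂, l1norm (fun j => blkN x i j - blkN x (i + 1) j)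
def gbar (m₁ m₂ d : ℕ) (Lf β : ℝ)
    (y : EuclideanSpace ℝ (Fin (3 * m₂ - 1) × Fin d)) : ℝ :=
  β / ((3 * m₁ * m₂ : ℕ) * Lf) * l1norm y
def IsProx {E : Type*} [NormedAddCommGroup E] [InnerProductSpace ℝ E]
    (η : ℝ) (ψ : E → ℝ) (x p : E) : Prop :=
  ∀ y, ψ p + ‖p - x‖ ^ 2 / (2 * η) ≤ ψ y + ‖y - x‖ ^ 2 / (2 * η)
def subdiff {E : Type*} [NormedAddCommGroup E] [InnerProductSpace ℝ E]
    (ψ : E → ℝ) (x : E) : Set E :=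
  {v | ∀ y, ψ x + (inner ℝ v (y - x) : ℝ) ≤ ψ y}
def suppSub {d : ℕ} (z : EuclideanSpace ℝ (Fin d)) (k : ℕ) : Prop :=
  ∀ j : Fin d, z j ≠ 0 → j.val + 1 ≤ k

/-- x is an ε̂-stationary point of instance 𝒫. -/
def IsStatP (m₁ m₂ d : ℕ) (Lf ε β εh : ℝ)
    (x : EuclideanSpace ℝ (Fin (3 * m₁ * m₂) × Fin d)) : Prop :=
  ∃ γ : EuclideanSpace ℝ (MCidx m₁ m₂ × Fin d), ∃ ξ ∈ subdiff (gfun m₁ m₂ d β) x,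
    ‖gradient (f0 (3 * m₁ * m₂) Lf ε) x + mvec (Amat m₁ m₂ d Lf)ᵀ γ + ξ‖ ≤ εh ∧
    ‖mvec (Amat m₁ m₂ d Lf) x‖ ≤ εh

/-- (x, y) is an ε̂-stationary point of the splitting reformulation (SP). -/
def IsStatSP (m₁ m₂ d : ℕ) (Lf ε β εh : ℝ)
    (x : EuclideanSpace ℝ (Fin (3 * m₁ * m₂) × Fin d))
    (y : EuclideanSpace ℝ (Fin (3 * m₂ - 1) × Fin d)) : Prop :=
  ∃ z₁ : EuclideanSpace ℝ (Fin (3 * m₂ - 1) × Fin d),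
    ∃ z₂ : EuclideanSpace ℝ (MCidx m₁ m₂ × Fin d),
      Metric.infDist 0 ((· - z₁) '' subdiff (gbar m₁ m₂ d Lf β) y) ≤ εh ∧
      ‖gradient (f0 (3 * m₁ * m₂) Lf ε) x + mvec (Abar m₁ m₂ d Lf)ᵀ z₁ +
        mvec (Amat m₁ m₂ d Lf)ᵀ z₂‖ ≤ εh ∧
      ‖y - mvec (Abar m₁ m₂ d Lf) x‖ ≤ εh ∧ ‖mvec (Amat m₁ m₂ d Lf) x‖ ≤ εh

/-- The sequence X follows Algorithm Class 1 on instance 𝒫. -/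
def FollowsAC1 (m₁ m₂ d : ℕ) (Lf ε β : ℝ)
    (X : ℕ → EuclideanSpace ℝ (Fin (3 * m₁ * m₂) × Fin d)) : Prop :=
  X 0 = 0 ∧ ∀ t, 1 ≤ t → ∃ η : ℝ, 0 < η ∧
    ∃ ξ ∈ Submodule.span ℝ (⋃ s ∈ Set.Iio t,
      ({X s, gradient (f0 (3 * m₁ * m₂) Lf ε) (X s),
        mvec ((Amat m₁ m₂ d Lf)ᵀ * Amat m₁ m₂ d Lf) (X s)} :
          Set (EuclideanSpace ℝ (Fin (3 * m₁ * m₂) × Fin d)))),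
      ∃ p, IsProx η (gfun m₁ m₂ d β) ξ p ∧
        X t ∈ Submodule.span ℝ ({ξ, p} : Set (EuclideanSpace ℝ (Fin (3 * m₁ * m₂) × Fin d)))

/-- The pair of sequences (X, Y) follows Algorithm Class 2 on the splitting
reformulation (SP) of instance 𝒫. -/
def FollowsAC2 (m₁ m₂ d : ℕ) (Lf ε β : ℝ)
    (X : ℕ → EuclideanSpace ℝ (Fin (3 * m₁ * m₂) × Fin d))
    (Y : ℕ → EuclideanSpace ℝ (Fin (3 * m₂ - 1) × Fin d)) : Prop :=
  X 0 = 0 ∧ Y 0 = 0 ∧ ∀ t, 1 ≤ t →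
    (X t ∈ Submodule.span ℝ (⋃ s ∈ Set.Iio t,
      ({X s, gradient (f0 (3 * m₁ * m₂) Lf ε) (X s),
        mvec ((Amat m₁ m₂ d Lf)ᵀ * Amat m₁ m₂ d Lf) (X s),
        mvec ((Abar m₁ m₂ d Lf)ᵀ * Abar m₁ m₂ d Lf) (X s),
        mvec (Abar m₁ m₂ d Lf)ᵀ (Y s)} :
          Set (EuclideanSpace ℝ (Fin (3 * m₁ * m₂) × Fin d))))) ∧
    ∃ η : ℝ, 0 < η ∧
      ∃ ξ ∈ Submodule.span ℝ (⋃ s ∈ Set.Iio t,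
        ({Y s, mvec (Abar m₁ m₂ d Lf * (Abar m₁ m₂ d Lf)ᵀ) (Y s),
          mvec (Abar m₁ m₂ d Lf) (X s)} :
            Set (EuclideanSpace ℝ (Fin (3 * m₂ - 1) × Fin d)))),
        ∃ p, IsProx η (gbar m₁ m₂ d Lf β) ξ p ∧
          Y t ∈ Submodule.span ℝ
            ({ξ, p} : Set (EuclideanSpace ℝ (Fin (3 * m₂ - 1) × Fin d)))


/- ===== auxiliary machinery for stmt_2 ===== -/

def psiD (u : ℝ) : ℝ := if u ≤ 0 then 0 else 2 * u * Real.exp (-u ^ 2)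

lemma Psi_nonneg' (u : ℝ) : 0 ≤ Psi u := by
  unfold Psi; split_ifs with h
  · exact le_rfl
  · have := Real.exp_le_one_iff.2 (by nlinarith : -u^2 ≤ 0); linarith

lemma Psi_le_one' (u : ℝ) : Psi u ≤ 1 := by
  unfold Psi; split_ifs with h
  · norm_num
  · have := Real.exp_pos (-u^2); linarith

lemma Psi_or' (u : ℝ) : Psi u = 0 ∨ Psi (-u) = 0 := by
  rcases le_or_gt u 0 with h | h
  · left; simp [Psi, h]
  · right; simp [Psi, h.le]

lemma psiD_or' (u : ℝ) : psiD u = 0 ∨ psiD (-u) = 0 := by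
  rcases le_or_gt u 0 with h | h
  · left; simp [psiD, h]
  · right; simp [psiD, h.le]

lemma abs_psiD_le' (u : ℝ) : |psiD u| ≤ 1 := by
  unfold psiD; split_ifs with h
  · norm_num
  · push_neg at h
    rw [abs_of_nonneg (by positivity)]
    have h1 : (1:ℝ) + u^2 ≤ Real.exp (u^2) := by
      have := Real.add_one_le_exp (u^2); linarith
    have h2 : 2*u ≤ Real.exp (u^2) := by nlinarith [sq_nonneg (u-1)]
    have h3 : Real.exp (-u^2) = (Real.exp (u^2))⁻¹ := by rw [← Real.exp_neg]
    have he := Real.exp_pos (u^2)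
    have h4 : 2*u*(Real.exp (u^2))⁻¹ ≤ Real.exp (u^2) * (Real.exp (u^2))⁻¹ := by
      gcongr
    rw [mul_inv_cancel₀ he.ne'] at h4
    rw [h3]; exact h4

lemma Phi_nonneg' (v : ℝ) : 0 ≤ Phi v := by
  have := Real.neg_pi_div_two_lt_arctan v
  unfold Phi; nlinarith [Real.pi_pos]

lemma Phi_le' (v : ℝ) : Phi v ≤ 4 * π := by
  have := Real.arctan_lt_pi_div_two v
  unfold Phi; nlinarith

lemma hasDerivAt_Phi (v : ℝ) : HasDerivAt Phi (4 / (1 + v ^ 2)) v := by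
  have h := (Real.hasDerivAt_arctan v).const_mul (4:ℝ)
  have h2 := (h.add_const (2 * π))
  have heq : (fun v => 4 * Real.arctan v + 2 * π) = Phi := rfl
  rw [heq] at h2
  rw [mul_one_div] at h2
  exact h2

lemma hasDerivAt_Psi (u : ℝ) : HasDerivAt Psi (psiD u) u := by
  rcases lt_trichotomy u 0 with h | h | h
  · have heq : Psi =ᶠ[nhds u] fun _ => (0:ℝ) := by
      filter_upwards [Iio_mem_nhds h] with v hv
      simp [Psi, le_of_lt (Set.mem_Iio.1 hv)]
    have h0 : HasDerivAt (fun _ : ℝ => (0:ℝ)) 0 u := hasDerivAt_const u 0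
    have := h0.congr_of_eventuallyEq heq
    simpa [psiD, h.le] using this
  · subst h
    rw [hasDerivAt_iff_isLittleO]
    have hP0 : Psi 0 = 0 := by simp [Psi]
    simp only [hP0, sub_zero, psiD, le_refl, if_pos, smul_zero, sub_zero]
    rw [Asymptotics.isLittleO_iff]
    intro c hc
    filter_upwards [Metric.ball_mem_nhds (0:ℝ) hc] with v hv
    rw [Metric.mem_ball, Real.dist_eq, sub_zero] at hv
    have h1 : |Psi v| ≤ v ^ 2 := by
      unfold Psi; split_ifs with h
      · simpa using sq_nonneg v
      · rw [abs_of_nonneg (by have := Real.exp_le_one_iff.2 (by nlinarith : -v^2 ≤ 0); linarith)]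
        have := Real.add_one_le_exp (-v^2)
        have h2 : Real.exp (-v^2) ≥ 1 - v^2 := by linarith
        linarith
    calc ‖Psi v‖ = |Psi v| := rfl
      _ ≤ v ^ 2 := h1
      _ = |v| * |v| := by rw [← abs_mul]; rw [abs_of_nonneg (mul_self_nonneg v), sq]
      _ ≤ c * |v| := by apply mul_le_mul_of_nonneg_right hv.le (abs_nonneg v)
      _ = c * ‖v‖ := rfl
  · have hD : HasDerivAt (fun v : ℝ => 1 - Real.exp (-v ^ 2)) (2 * u * Real.exp (-u ^ 2)) u := by
      have h1 : HasDerivAt (fun v : ℝ => -v ^ 2) (-(2 * u)) u := by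
        simpa using (hasDerivAt_pow 2 u).fun_neg
      have h2 := (Real.hasDerivAt_exp (-u ^ 2)).comp u h1
      have h3 := (hasDerivAt_const u (1:ℝ)).fun_sub h2
      have h4 : (0:ℝ) - Real.exp (-u ^ 2) * -(2 * u) = 2 * u * Real.exp (-u ^ 2) := by ring
      rw [h4] at h3
      have h5 : (fun x => 1 - (Real.exp ∘ fun v : ℝ => -v ^ 2) x) = fun v : ℝ => 1 - Real.exp (-v ^ 2) := by
        funext v; simp [Function.comp]
      rwa [h5] at h3
    have heq : Psi =ᶠ[nhds u] fun v => 1 - Real.exp (-v ^ 2) := by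
      filter_upwards [Ioi_mem_nhds h] with v hv
      simp [Psi, not_le.2 (Set.mem_Ioi.1 hv)]
    have := hD.congr_of_eventuallyEq heq
    simpa [psiD, not_le.2 h] using this

def coordL (d k : ℕ) : EuclideanSpace ℝ (Fin d) →L[ℝ] ℝ :=
  if h : 1 ≤ k ∧ k - 1 < d then EuclideanSpace.proj (⟨k - 1, h.2⟩ : Fin d) else 0

lemma coordL_apply {d : ℕ} (k : ℕ) (z : EuclideanSpace ℝ (Fin d)) :
    coordL d k z = zc z k := by
  unfold coordL zc
  split_ifs with h
  · rfl
  · rfl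

lemma hasFDerivAt_zc {d : ℕ} (k : ℕ) (z : EuclideanSpace ℝ (Fin d)) :
    HasFDerivAt (fun z : EuclideanSpace ℝ (Fin d) => zc z k) (coordL d k) z := by
  have h : (fun z : EuclideanSpace ℝ (Fin d) => zc z k) = coordL d k := by
    funext w; exact (coordL_apply k w).symm
  rw [h]
  exact (coordL d k).hasFDerivAt

lemma coordL_single {d : ℕ} (k : ℕ) (j : Fin d) :
    coordL d k (EuclideanSpace.single j 1) = if k = j.val + 1 then 1 else 0 := by
  unfold coordL
  split_ifs with h h2 h2
  · show (EuclideanSpace.single j (1:ℝ)) ⟨k-1, h.2⟩ = 1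
    rw [EuclideanSpace.single_apply, if_pos (Fin.ext (show k - 1 = (j:ℕ) by omega))]
  · show (EuclideanSpace.single j (1:ℝ)) ⟨k-1, h.2⟩ = 0
    rw [EuclideanSpace.single_apply, if_neg]
    intro hh
    exact h2 (by have := congrArg Fin.val hh; simp at this; omega)
  · exfalso; have := j.isLt; omega
  · rfl

def cA {d : ℕ} (z : EuclideanSpace ℝ (Fin d)) (j : ℕ) : ℝ :=
  -(psiD (-zc z (j - 1)) * Phi (-zc z j)) - psiD (zc z (j - 1)) * Phi (zc z j)
def cB {d : ℕ} (z : EuclideanSpace ℝ (Fin d)) (j : ℕ) : ℝ :=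
  -(Psi (-zc z (j - 1)) * (4 / (1 + zc z j ^ 2))) - Psi (zc z (j - 1)) * (4 / (1 + zc z j ^ 2))
def Dphi {d : ℕ} (z : EuclideanSpace ℝ (Fin d)) (j : ℕ) : EuclideanSpace ℝ (Fin d) →L[ℝ] ℝ :=
  cA z j • coordL d (j - 1) + cB z j • coordL d j
def D1 {d : ℕ} (z : EuclideanSpace ℝ (Fin d)) : EuclideanSpace ℝ (Fin d) →L[ℝ] ℝ :=
  (-(Psi 1 * (4 / (1 + zc z 1 ^ 2)))) • coordL d 1

lemma hasFDerivAt_phi {d : ℕ} (j : ℕ) (hj : j ≠ 1) (z : EuclideanSpace ℝ (Fin d)) :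
    HasFDerivAt (fun z : EuclideanSpace ℝ (Fin d) => phi z j) (Dphi z j) z := by
  have hA := hasFDerivAt_zc (j - 1) z
  have hB := hasFDerivAt_zc j z
  have h1 : HasFDerivAt (fun z : EuclideanSpace ℝ (Fin d) => Psi (-zc z (j - 1)))
      (psiD (-zc z (j - 1)) • (-coordL d (j - 1))) z :=
    (hasDerivAt_Psi _).comp_hasFDerivAt z hA.neg
  have h2 : HasFDerivAt (fun z : EuclideanSpace ℝ (Fin d) => Phi (-zc z j))
      ((4 / (1 + (-zc z j) ^ 2)) • (-coordL d j)) z :=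
    (hasDerivAt_Phi _).comp_hasFDerivAt z hB.neg
  have h3 : HasFDerivAt (fun z : EuclideanSpace ℝ (Fin d) => Psi (zc z (j - 1)))
      (psiD (zc z (j - 1)) • coordL d (j - 1)) z :=
    (hasDerivAt_Psi _).comp_hasFDerivAt z hA
  have h4 : HasFDerivAt (fun z : EuclideanSpace ℝ (Fin d) => Phi (zc z j))
      ((4 / (1 + zc z j ^ 2)) • coordL d j) z :=
    (hasDerivAt_Phi _).comp_hasFDerivAt z hB
  have h5 := (h1.fun_mul h2).fun_sub (h3.fun_mul h4)
  have hfn : (fun z : EuclideanSpace ℝ (Fin d) =>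
      Psi (-zc z (j - 1)) * Phi (-zc z j) - Psi (zc z (j - 1)) * Phi (zc z j)) =
      fun z : EuclideanSpace ℝ (Fin d) => phi z j := by
    funext w; simp [phi, hj]
  rw [hfn] at h5
  refine h5.congr_fderiv ?_
  ext w
  simp only [Dphi, ContinuousLinearMap.add_apply, ContinuousLinearMap.smul_apply,
    ContinuousLinearMap.sub_apply, ContinuousLinearMap.neg_apply, smul_eq_mul, neg_sq, cA, cB]
  ring

lemma hasFDerivAt_phi1 {d : ℕ} (z : EuclideanSpace ℝ (Fin d)) :
    HasFDerivAt (fun z : EuclideanSpace ℝ (Fin d) => phi z 1) (D1 z) z := by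
  have h4 : HasFDerivAt (fun z : EuclideanSpace ℝ (Fin d) => Phi (zc z 1))
      ((4 / (1 + zc z 1 ^ 2)) • coordL d 1) z :=
    (hasDerivAt_Phi _).comp_hasFDerivAt z (hasFDerivAt_zc 1 z)
  have h5 := (h4.const_mul (Psi 1)).fun_neg
  have hfn : (fun z : EuclideanSpace ℝ (Fin d) => -(Psi 1 * Phi (zc z 1))) =
      fun z : EuclideanSpace ℝ (Fin d) => phi z 1 := by
    funext w; simp [phi]
  rw [hfn] at h5
  refine h5.congr_fderiv ?_
  ext w
  simp only [D1, ContinuousLinearMap.smul_apply, ContinuousLinearMap.neg_apply, smul_eq_mul]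
  ring

lemma abs_phid_le (v : ℝ) : |4 / (1 + v ^ 2)| ≤ 4 := by
  rw [abs_of_nonneg (by positivity)]
  rw [div_le_iff₀ (by positivity)]
  nlinarith [sq_nonneg v]

lemma abs_cA_le {d : ℕ} (z : EuclideanSpace ℝ (Fin d)) (j : ℕ) : |cA z j| ≤ 4 * π := by
  have hb1 := abs_psiD_le' (zc z (j-1))
  have hb2 := abs_psiD_le' (-zc z (j-1))
  have hp1 := Phi_nonneg' (zc z j); have hp2 := Phi_nonneg' (-zc z j)
  have hq1 := Phi_le' (zc z j); have hq2 := Phi_le' (-zc z j)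
  have hpi := Real.pi_pos
  rcases psiD_or' (zc z (j-1)) with h | h <;>
  · simp only [cA, h, zero_mul, mul_zero, sub_zero, zero_sub, abs_neg, neg_zero, neg_mul]
    rw [abs_mul]
    calc |psiD _| * |Phi _| ≤ 1 * (4*π) := by
          apply mul_le_mul (by assumption) (by rw [abs_of_nonneg] <;> assumption)
            (abs_nonneg _) (by norm_num)
      _ = 4*π := by ring

lemma abs_cB_le {d : ℕ} (z : EuclideanSpace ℝ (Fin d)) (j : ℕ) : |cB z j| ≤ 4 := by
  have hb1 := Psi_le_one' (zc z (j-1)); have hb2 := Psi_le_one' (-zc z (j-1))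
  have hn1 := Psi_nonneg' (zc z (j-1)); have hn2 := Psi_nonneg' (-zc z (j-1))
  have hp := abs_phid_le (zc z j)
  rcases Psi_or' (zc z (j-1)) with h | h <;>
  · simp only [cB, h, zero_mul, mul_zero, sub_zero, zero_sub, abs_neg, neg_zero, neg_mul]
    rw [abs_mul]
    calc |Psi _| * |4 / (1 + zc z j ^ 2)| ≤ 1 * 4 := by
          apply mul_le_mul _ hp (abs_nonneg _) (by norm_num)
          rw [abs_of_nonneg] <;> assumption
      _ = 4 := by ring

lemma abs_D1_single {d : ℕ} (z : EuclideanSpace ℝ (Fin d)) (j : Fin d) :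
    |D1 z (EuclideanSpace.single j 1)| ≤ 4 := by
  have h1 := Psi_le_one' 1; have h0 := Psi_nonneg' 1
  have hp := abs_phid_le (zc z 1)
  simp only [D1, ContinuousLinearMap.smul_apply, smul_eq_mul, coordL_single]
  rw [abs_mul]
  split_ifs with h
  · rw [abs_one, mul_one, abs_neg, abs_mul]
    calc |Psi 1| * |4 / (1 + zc z 1 ^ 2)| ≤ 1 * 4 := by
          apply mul_le_mul _ hp (abs_nonneg _) (by norm_num)
          rw [abs_of_nonneg h0]; exact h1
      _ = 4 := by ring
  · simp

def Deven {d : ℕ} (z : EuclideanSpace ℝ (Fin d)) : EuclideanSpace ℝ (Fin d) →L[ℝ] ℝ :=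
  D1 z + (3:ℝ) • ∑ t ∈ Finset.Icc 1 (d / 2), Dphi z (2 * t)
def Dodd {d : ℕ} (z : EuclideanSpace ℝ (Fin d)) : EuclideanSpace ℝ (Fin d) →L[ℝ] ℝ :=
  D1 z + (3:ℝ) • ∑ t ∈ Finset.Icc 1 (d / 2), Dphi z (2 * t + 1)

lemma hasFDerivAt_even {d : ℕ} (z : EuclideanSpace ℝ (Fin d)) :
    HasFDerivAt (fun z : EuclideanSpace ℝ (Fin d) =>
      phi z 1 + 3 * ∑ j ∈ Finset.Icc 1 (d / 2), phi z (2 * j)) (Deven z) z := by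
  have hs : HasFDerivAt (fun z : EuclideanSpace ℝ (Fin d) =>
      ∑ j ∈ Finset.Icc 1 (d / 2), phi z (2 * j))
      (∑ t ∈ Finset.Icc 1 (d / 2), Dphi z (2 * t)) z := by
    apply HasFDerivAt.fun_sum
    intro t ht
    simp only [Finset.mem_Icc] at ht
    apply hasFDerivAt_phi
    omega
  exact (hasFDerivAt_phi1 z).add (hs.const_mul 3)

lemma hasFDerivAt_odd {d : ℕ} (z : EuclideanSpace ℝ (Fin d)) :
    HasFDerivAt (fun z : EuclideanSpace ℝ (Fin d) =>
      phi z 1 + 3 * ∑ j ∈ Finset.Icc 1 (d / 2), phi z (2 * j + 1)) (Dodd z) z := by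
  have hs : HasFDerivAt (fun z : EuclideanSpace ℝ (Fin d) =>
      ∑ j ∈ Finset.Icc 1 (d / 2), phi z (2 * j + 1))
      (∑ t ∈ Finset.Icc 1 (d / 2), Dphi z (2 * t + 1)) z := by
    apply HasFDerivAt.fun_sum
    intro t ht
    simp only [Finset.mem_Icc] at ht
    apply hasFDerivAt_phi
    omega
  exact (hasFDerivAt_phi1 z).add (hs.const_mul 3)

lemma pi_big : (1:ℝ) ≤ π := by linarith [Real.pi_gt_three]

lemma sum_even_le {d : ℕ} (z : EuclideanSpace ℝ (Fin d)) (j : Fin d) :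
    |∑ t ∈ Finset.Icc 1 (d / 2), Dphi z (2 * t) (EuclideanSpace.single j 1)| ≤ 4 * π := by
  have hpi := pi_big
  calc |∑ t ∈ Finset.Icc 1 (d / 2), Dphi z (2 * t) (EuclideanSpace.single j 1)|
      ≤ ∑ t ∈ Finset.Icc 1 (d / 2), |Dphi z (2 * t) (EuclideanSpace.single j 1)| :=
        Finset.abs_sum_le_sum_abs _ _
    _ ≤ ∑ t ∈ Finset.Icc 1 (d / 2), (if t = (j.val + 2) / 2 then 4 * π else 0) := by
        apply Finset.sum_le_sum
        intro t ht
        simp only [Finset.mem_Icc] at ht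
        simp only [Dphi, ContinuousLinearMap.add_apply, ContinuousLinearMap.smul_apply,
          smul_eq_mul, coordL_single]
        by_cases h0 : t = (j.val + 2) / 2
        · rw [if_pos h0]
          by_cases e1 : 2 * t - 1 = j.val + 1
          · have e2 : ¬(2 * t = j.val + 1) := by omega
            rw [if_pos e1, if_neg e2, mul_one, mul_zero, add_zero]
            exact abs_cA_le z _
          · rw [if_neg e1]
            by_cases e2 : 2 * t = j.val + 1
            · rw [if_pos e2, mul_zero, mul_one, zero_add]
              calc |cB z (2*t)| ≤ 4 := abs_cB_le z _
                _ ≤ 4 * π := by nlinarith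
            · rw [if_neg e2, mul_zero, mul_zero, add_zero, abs_zero]; positivity
        · rw [if_neg h0]
          have e1 : ¬(2 * t - 1 = j.val + 1) := by omega
          have e2 : ¬(2 * t = j.val + 1) := by omega
          rw [if_neg e1, if_neg e2, mul_zero, mul_zero, add_zero, abs_zero]
    _ ≤ 4 * π := by
        rw [Finset.sum_ite_eq' (Finset.Icc 1 (d / 2)) ((j.val + 2) / 2) (fun _ => 4 * π)]
        split_ifs
        · exact le_rfl
        · positivity

lemma sum_odd_le {d : ℕ} (z : EuclideanSpace ℝ (Fin d)) (j : Fin d) :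
    |∑ t ∈ Finset.Icc 1 (d / 2), Dphi z (2 * t + 1) (EuclideanSpace.single j 1)| ≤ 4 * π := by
  have hpi := pi_big
  calc |∑ t ∈ Finset.Icc 1 (d / 2), Dphi z (2 * t + 1) (EuclideanSpace.single j 1)|
      ≤ ∑ t ∈ Finset.Icc 1 (d / 2), |Dphi z (2 * t + 1) (EuclideanSpace.single j 1)| :=
        Finset.abs_sum_le_sum_abs _ _
    _ ≤ ∑ t ∈ Finset.Icc 1 (d / 2), (if t = (j.val + 1) / 2 then 4 * π else 0) := by
        apply Finset.sum_le_sum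
        intro t ht
        simp only [Finset.mem_Icc] at ht
        simp only [Dphi, ContinuousLinearMap.add_apply, ContinuousLinearMap.smul_apply,
          smul_eq_mul, coordL_single]
        by_cases h0 : t = (j.val + 1) / 2
        · rw [if_pos h0]
          by_cases e1 : 2 * t + 1 - 1 = j.val + 1
          · have e2 : ¬(2 * t + 1 = j.val + 1) := by omega
            rw [if_pos e1, if_neg e2, mul_one, mul_zero, add_zero]
            exact abs_cA_le z _
          · rw [if_neg e1]
            by_cases e2 : 2 * t + 1 = j.val + 1
            · rw [if_pos e2, mul_zero, mul_one, zero_add]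
              calc |cB z (2*t+1)| ≤ 4 := abs_cB_le z _
                _ ≤ 4 * π := by nlinarith
            · rw [if_neg e2, mul_zero, mul_zero, add_zero, abs_zero]; positivity
        · rw [if_neg h0]
          have e1 : ¬(2 * t + 1 - 1 = j.val + 1) := by omega
          have e2 : ¬(2 * t + 1 = j.val + 1) := by omega
          rw [if_neg e1, if_neg e2, mul_zero, mul_zero, add_zero, abs_zero]
    _ ≤ 4 * π := by
        rw [Finset.sum_ite_eq' (Finset.Icc 1 (d / 2)) ((j.val + 1) / 2) (fun _ => 4 * π)]
        split_ifs
        · exact le_rfl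
        · positivity

lemma abs_Deven_single {d : ℕ} (z : EuclideanSpace ℝ (Fin d)) (j : Fin d) :
    |Deven z (EuclideanSpace.single j 1)| ≤ 4 + 12 * π := by
  have h1 := abs_D1_single z j
  have h2 := sum_even_le z j
  simp only [Deven, ContinuousLinearMap.add_apply, ContinuousLinearMap.smul_apply,
    ContinuousLinearMap.coe_sum', Finset.sum_apply, smul_eq_mul]
  calc |D1 z (EuclideanSpace.single j 1) +
        3 * ∑ t ∈ Finset.Icc 1 (d / 2), Dphi z (2 * t) (EuclideanSpace.single j 1)|
      ≤ |D1 z (EuclideanSpace.single j 1)| +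
        3 * |∑ t ∈ Finset.Icc 1 (d / 2), Dphi z (2 * t) (EuclideanSpace.single j 1)| := by
        have := abs_add_le (D1 z (EuclideanSpace.single j 1))
          (3 * ∑ t ∈ Finset.Icc 1 (d / 2), Dphi z (2 * t) (EuclideanSpace.single j 1))
        rw [abs_mul, abs_of_nonneg (by norm_num : (0:ℝ) ≤ 3)] at this
        exact this
    _ ≤ 4 + 3 * (4 * π) := by
        have h3 : (0:ℝ) ≤ 3 := by norm_num
        gcongr
    _ = 4 + 12 * π := by ring

lemma abs_Dodd_single {d : ℕ} (z : EuclideanSpace ℝ (Fin d)) (j : Fin d) :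
    |Dodd z (EuclideanSpace.single j 1)| ≤ 4 + 12 * π := by
  have h1 := abs_D1_single z j
  have h2 := sum_odd_le z j
  simp only [Dodd, ContinuousLinearMap.add_apply, ContinuousLinearMap.smul_apply,
    ContinuousLinearMap.coe_sum', Finset.sum_apply, smul_eq_mul]
  calc |D1 z (EuclideanSpace.single j 1) +
        3 * ∑ t ∈ Finset.Icc 1 (d / 2), Dphi z (2 * t + 1) (EuclideanSpace.single j 1)|
      ≤ |D1 z (EuclideanSpace.single j 1)| +
        3 * |∑ t ∈ Finset.Icc 1 (d / 2), Dphi z (2 * t + 1) (EuclideanSpace.single j 1)| := by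
        have := abs_add_le (D1 z (EuclideanSpace.single j 1))
          (3 * ∑ t ∈ Finset.Icc 1 (d / 2), Dphi z (2 * t + 1) (EuclideanSpace.single j 1))
        rw [abs_mul, abs_of_nonneg (by norm_num : (0:ℝ) ≤ 3)] at this
        exact this
    _ ≤ 4 + 3 * (4 * π) := by
        have h3 : (0:ℝ) ≤ 3 := by norm_num
        gcongr
    _ = 4 + 12 * π := by ring

lemma abs_D1_single' {d : ℕ} (z : EuclideanSpace ℝ (Fin d)) (j : Fin d) :
    |D1 z (EuclideanSpace.single j 1)| ≤ 4 + 12 * π := by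
  have := abs_D1_single z j
  have hpi := Real.pi_pos
  linarith

lemma grad_wrapper {d : ℕ} (f : EuclideanSpace ℝ (Fin d) → ℝ)
    (D : EuclideanSpace ℝ (Fin d) → (EuclideanSpace ℝ (Fin d) →L[ℝ] ℝ))
    (hD : ∀ z, HasFDerivAt f (D z) z)
    (hB : ∀ z (j : Fin d), |D z (EuclideanSpace.single j 1)| ≤ 4 + 12 * π) :
    (∀ (z : EuclideanSpace ℝ (Fin d)) (j : Fin d), |gradient f z j| < 25 * π) ∧
    (∀ z : EuclideanSpace ℝ (Fin d), ‖gradient f z‖ ≤ 25 * π * Real.sqrt d) ∧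
    (∀ z z' : EuclideanSpace ℝ (Fin d), |f z - f z'| ≤ 25 * π * Real.sqrt d * ‖z - z'‖) := by
  have hpi := Real.pi_gt_three
  have hkey : ∀ z, gradient f z = (InnerProductSpace.toDual ℝ _).symm (D z) := by
    intro z
    exact ((hD z).hasGradientAt).gradient
  have hcomp : ∀ (z : EuclideanSpace ℝ (Fin d)) (j : Fin d),
      gradient f z j = D z (EuclideanSpace.single j 1) := by
    intro z j
    rw [hkey z]
    have h1 : D z (EuclideanSpace.single j 1) =
        (InnerProductSpace.toDual ℝ (EuclideanSpace ℝ (Fin d)))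
          ((InnerProductSpace.toDual ℝ _).symm (D z)) (EuclideanSpace.single j 1) := by
      rw [LinearIsometryEquiv.apply_symm_apply]
    rw [h1, InnerProductSpace.toDual_apply_apply, EuclideanSpace.inner_single_right]
    simp
  have hb2 : ∀ (z : EuclideanSpace ℝ (Fin d)) (j : Fin d),
      |gradient f z j| ≤ 4 + 12 * π := by
    intro z j; rw [hcomp]; exact hB z j
  have hnorm : ∀ z : EuclideanSpace ℝ (Fin d), ‖gradient f z‖ ≤ 25 * π * Real.sqrt d := by
    intro z
    rw [EuclideanSpace.norm_eq]
    have hsum : ∑ j : Fin d, ‖gradient f z j‖ ^ 2 ≤ ∑ _j : Fin d, (25 * π) ^ 2 := by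
      apply Finset.sum_le_sum
      intro j _
      have h1 : ‖gradient f z j‖ ≤ 25 * π := by
        rw [Real.norm_eq_abs]
        calc |gradient f z j| ≤ 4 + 12 * π := hb2 z j
          _ ≤ 25 * π := by nlinarith
      nlinarith [norm_nonneg (gradient f z j)]
    calc Real.sqrt (∑ j : Fin d, ‖gradient f z j‖ ^ 2)
        ≤ Real.sqrt (∑ _j : Fin d, (25 * π) ^ 2) := Real.sqrt_le_sqrt hsum
      _ = Real.sqrt (d * (25 * π) ^ 2) := by
          rw [Finset.sum_const, Finset.card_univ, Fintype.card_fin, nsmul_eq_mul]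
      _ = Real.sqrt d * (25 * π) := by
          rw [Real.sqrt_mul (by positivity), Real.sqrt_sq (by positivity)]
      _ = 25 * π * Real.sqrt d := by ring
  refine ⟨fun z j => ?_, hnorm, fun z z' => ?_⟩
  · calc |gradient f z j| ≤ 4 + 12 * π := hb2 z j
      _ < 25 * π := by nlinarith
  · have hDnorm : ∀ x : EuclideanSpace ℝ (Fin d), ‖D x‖ ≤ 25 * π * Real.sqrt d := by
      intro x
      have h1 : ‖D x‖ = ‖(InnerProductSpace.toDual ℝ
          (EuclideanSpace ℝ (Fin d))).symm (D x)‖ :=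
        (LinearIsometryEquiv.norm_map _ (D x)).symm
      rw [h1, ← hkey x]
      exact hnorm x
    have := Convex.norm_image_sub_le_of_norm_hasFDerivWithin_le
      (f' := D) (fun x _ => (hD x).hasFDerivWithinAt)
      (fun x _ => hDnorm x) convex_univ (Set.mem_univ z') (Set.mem_univ z)
    simpa [Real.norm_eq_abs] using this


/-- For i = 1,…,m: every partial derivative of h_i is < 25π in absolute value,
hence ‖∇h_i‖ ≤ 25π√d̄ and h_i is 25π√d̄-Lipschitz. -/
theorem stmt_2 (m₁ m₂ : ℕ) (hm₁ : 2 ≤ m₁) (hm₂ : 1 ≤ m₂) (heven : Even (m₁ * m₂))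
    (d : ℕ) (hd : 5 ≤ d) (hodd : Odd d)
    (i : ℕ) (hi1 : 1 ≤ i) (him : i ≤ 3 * m₁ * m₂) :
    (∀ (z : EuclideanSpace ℝ (Fin d)) (j : Fin d),
      |gradient (hfun (3 * m₁ * m₂) i) z j| < 25 * π) ∧
    (∀ z : EuclideanSpace ℝ (Fin d),
      ‖gradient (hfun (3 * m₁ * m₂) i) z‖ ≤ 25 * π * Real.sqrt d) ∧
    (∀ z z' : EuclideanSpace ℝ (Fin d),
      |hfun (3 * m₁ * m₂) i z - hfun (3 * m₁ * m₂) i z'| ≤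
        25 * π * Real.sqrt d * ‖z - z'‖) := by
  by_cases h1 : i ≤ 3 * m₁ * m₂ / 3
  · have hfe : hfun (3 * m₁ * m₂) i = fun z : EuclideanSpace ℝ (Fin d) =>
        phi z 1 + 3 * ∑ j ∈ Finset.Icc 1 (d / 2), phi z (2 * j) := by
      funext z; simp only [hfun, if_pos h1]
    rw [hfe]
    exact grad_wrapper _ Deven hasFDerivAt_even abs_Deven_single
  · by_cases h2 : i ≤ 2 * (3 * m₁ * m₂) / 3
    · have hfe : hfun (3 * m₁ * m₂) i = fun z : EuclideanSpace ℝ (Fin d) =>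
          phi z 1 := by
        funext z; simp only [hfun, if_neg h1, if_pos h2]
      rw [hfe]
      exact grad_wrapper _ D1 hasFDerivAt_phi1 abs_D1_single'
    · have hfe : hfun (3 * m₁ * m₂) i = fun z : EuclideanSpace ℝ (Fin d) =>
          phi z 1 + 3 * ∑ j ∈ Finset.Icc 1 (d / 2), phi z (2 * j + 1) := by
        funext z; simp only [hfun, if_neg h1, if_neg h2]
      rw [hfe]
      exact grad_wrapper _ Dodd hasFDerivAt_odd abs_Dodd_single


end
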